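/- (Assertion I) If the APFA A₀ is obtained from an APFA A by state merging, then the corresponding completed models are nested: the model (A₀)⁺ is a submodel of the model A⁺, i.e. every joint probability distribution realized by some assignment of edge probabilities to (A₀)⁺ is also realized by some assignment of edge probabilities to A⁺. -/
import Mathlib


open scoped Classical

universe u v w

/-- The raw data of a finite directed multigraph with edge symbols:
sources, targets, symbols, a root, a sink, and the common root-to-sink path length `p`. -/
structure PreAPFA (V : Type u) (E : Type v) (Sym : Type w) where
  src : E → V
  tgt : E → V
  sym : E → Sym
  root : V
  sink : V
  p : ℕ

namespace PreAPFA

variable {V : Type u} {E : Type v} {Sym : Type w}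

/-- `A.IsPathFrom u w es`: the list of edges `es` is a directed path from `u` to `w`. -/
def IsPathFrom (A : PreAPFA V E Sym) : V → V → List E → Prop
  | u, w, [] => u = w
  | u, w, e :: es => A.src e = u ∧ A.IsPathFrom (A.tgt e) w es

/-- `es` is a root-to-sink path. -/
def IsRootSink (A : PreAPFA V E Sym) (es : List E) : Prop :=
  A.IsPathFrom A.root A.sink es

/-- The node reached from `u` after traversing the edges `es`. -/
def nodeAfter (A : PreAPFA V E Sym) : V → List E → V
  | u, [] => u
  | _, e :: es => A.nodeAfter (A.tgt e) es

/-- `x` is a node at level `i`: some path from the root to `x` has length `i`. -/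
def HasLevel (A : PreAPFA V E Sym) (x : V) (i : ℕ) : Prop :=
  ∃ es : List E, A.IsPathFrom A.root x es ∧ es.length = i

end PreAPFA

/-- The graph of an acyclic probabilistic finite automaton: a finite directed multigraph
with a unique root (only outgoing edges) and unique sink (only incoming edges), distinct
symbols on the outgoing edges of every node, every node on a root-to-sink path, and all
root-to-sink paths of the same length `p`. -/
structure APFAGraph (V : Type u) (E : Type v) (Sym : Type w) [Fintype V] [Fintype E]
    extends PreAPFA V E Sym where
  no_in_root : ∀ e : E, tgt e ≠ root
  no_out_sink : ∀ e : E, src e ≠ sink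
  sym_inj : ∀ e f : E, src e = src f → sym e = sym f → e = f
  connected : ∀ x : V, ∃ es fs : List E,
    toPreAPFA.IsPathFrom root x es ∧ toPreAPFA.IsPathFrom x sink fs
  const_len : ∀ es : List E, toPreAPFA.IsRootSink es → es.length = p

/-- An acyclic probabilistic finite automaton (APFA): an `APFAGraph` together with
nonnegative edge probabilities summing to one on the outgoing edges of every non-sink node. -/
structure APFA (V : Type u) (E : Type v) (Sym : Type w) [Fintype V] [Fintype E]
    extends APFAGraph V E Sym where
  prob : E → ℝ
  prob_nonneg : ∀ e : E, 0 ≤ prob e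
  prob_sum : ∀ x : V, x ≠ sink → ∑ e : E, (if src e = x then prob e else 0) = 1


/-- `X_{i+1}` in the paper's notation: the set of symbols appearing on edges from a
level-`i` node to a level-`i+1` node. -/
def APFAGraph.symsAt {V : Type u} {E : Type v} {Sym : Type w} [Fintype V] [Fintype E]
    (A : APFAGraph V E Sym) (i : ℕ) : Set Sym :=
  {s | ∃ e : E, A.toPreAPFA.HasLevel (A.src e) i ∧ A.sym e = s}

/-- An APFA graph is *complete* if every level-`i` node with `i < p` has one outgoing edge
for each symbol in `X_{i+1}` (equivalently, exactly `|X_{i+1}|` outgoing edges, since the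
symbols on the outgoing edges of a node are distinct). -/
def APFAGraph.Complete {V : Type u} {E : Type v} {Sym : Type w} [Fintype V] [Fintype E]
    (A : APFAGraph V E Sym) : Prop :=
  ∀ (x : V) (i : ℕ), A.toPreAPFA.HasLevel x i → i < A.p →
    ∀ s ∈ A.symsAt i, ∃ e : E, A.src e = x ∧ A.sym e = s

/-- The node-merging relation generated by merging the node set `s`: nodes `x` and `y` are
(directly) merged iff they are corresponding descendants of two nodes `v, w ∈ s`, i.e.
there are paths `v → x` and `w → y` with identical symbol sequences. -/
def PreAPFA.mergeRelV {V : Type u} {E : Type v} {Sym : Type w}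
    (A : PreAPFA V E Sym) (s : Set V) (x y : V) : Prop :=
  ∃ v ∈ s, ∃ w ∈ s, ∃ es fs : List E,
    A.IsPathFrom v x es ∧ A.IsPathFrom w y fs ∧ es.map A.sym = fs.map A.sym

/-- The edge-merging relation generated by merging the node set `s`: edges `e` and `f` are
(directly) merged iff they are corresponding descendant edges of two nodes `v, w ∈ s`, i.e.
there are paths `v → tgt e` and `w → tgt f` with identical symbol sequences whose last
edges are `e` and `f`. -/
def PreAPFA.mergeRelE {V : Type u} {E : Type v} {Sym : Type w}
    (A : PreAPFA V E Sym) (s : Set V) (e f : E) : Prop :=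
  ∃ v ∈ s, ∃ w ∈ s, ∃ es fs : List E,
    A.IsPathFrom v (A.tgt e) (es ++ [e]) ∧ A.IsPathFrom w (A.tgt f) (fs ++ [f]) ∧
    (es ++ [e]).map A.sym = (fs ++ [f]).map A.sym

/-- `B` is the APFA obtained from `A` by merging the node set `s`, witnessed by the
surjections `φV`, `φE` identifying exactly the nodes (resp. edges) related by the
equivalence closure of the merging relation. -/
structure IsMergeOf {V : Type u} {E : Type v} {V' : Type u} {E' : Type v} {Sym : Type w}
    [Fintype V] [Fintype E] [Fintype V'] [Fintype E']
    (A : APFA V E Sym) (s : Set V) (B : APFA V' E' Sym)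
    (φV : V → V') (φE : E → E') : Prop where
  surjV : Function.Surjective φV
  surjE : Function.Surjective φE
  src_comm : ∀ e, B.src (φE e) = φV (A.src e)
  tgt_comm : ∀ e, B.tgt (φE e) = φV (A.tgt e)
  sym_comm : ∀ e, B.sym (φE e) = A.sym e
  root_comm : φV A.root = B.root
  sink_comm : φV A.sink = B.sink
  p_eq : B.p = A.p
  eqV : ∀ x y : V, φV x = φV y ↔ Relation.EqvGen (A.toPreAPFA.mergeRelV s) x y
  eqE : ∀ e f : E, φE e = φE f ↔ Relation.EqvGen (A.toPreAPFA.mergeRelE s) e f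

/-- `B` is the completion `A⁺` of `A`, witnessed by the embedding `(ιV, ιE)`:
`A` embeds in `B` compatibly with sources, targets, symbols, root, sink and `p`;
`B` is complete and has the same symbol sets `X_i` as `A`; every new node (not coming
from `A`) has exactly one incoming edge (the added descendant subgraphs are trees); and
every new edge targets either a new node or the sink. -/
structure IsCompletionOf {V : Type u} {E : Type v} {V' : Type u} {E' : Type v} {Sym : Type w}
    [Fintype V] [Fintype E] [Fintype V'] [Fintype E']
    (A : APFA V E Sym) (B : APFA V' E' Sym)
    (ιV : V → V') (ιE : E → E') : Prop where
  injV : Function.Injective ιV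
  injE : Function.Injective ιE
  src_comm : ∀ e, B.src (ιE e) = ιV (A.src e)
  tgt_comm : ∀ e, B.tgt (ιE e) = ιV (A.tgt e)
  sym_comm : ∀ e, B.sym (ιE e) = A.sym e
  root_comm : ιV A.root = B.root
  sink_comm : ιV A.sink = B.sink
  p_eq : B.p = A.p
  complete : B.toAPFAGraph.Complete
  syms_eq : ∀ i, B.toAPFAGraph.symsAt i = A.toAPFAGraph.symsAt i
  new_node_unique_in : ∀ x' : V', x' ∉ Set.range ιV → ∃! e' : E', B.tgt e' = x'
  new_edge_tgt : ∀ e' : E', e' ∉ Set.range ιE → B.tgt e' ∈ Set.range ιV →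
    B.tgt e' = B.sink

/-- The statistical model of an APFA: the set of joint distributions over symbol strings
obtained by assigning edge probabilities (nonnegative, summing to one on the out-edges of
each non-sink node); the probability of a string is the sum, over root-to-sink paths with
that symbol string, of the product of the edge probabilities along the path.  (Since every
root-to-sink path has length `A.p`, paths are enumerated as `List.ofFn f` for
`f : Fin A.p → E`.) -/
def APFA.Model {V : Type u} {E : Type v} {Sym : Type w} [Fintype V] [Fintype E]
    (A : APFA V E Sym) : Set (List Sym → ℝ) :=
  {P | ∃ π : E → ℝ, (∀ e, 0 ≤ π e) ∧
    (∀ x : V, x ≠ A.sink → ∑ e : E, (if A.src e = x then π e else 0) = 1) ∧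
    ∀ xs : List Sym,
      P xs = ∑ f : Fin A.p → E,
        if A.IsRootSink (List.ofFn f) ∧ (List.ofFn f).map A.sym = xs
        then ((List.ofFn f).map π).prod else 0}

/-! ### Auxiliary lemmas -/

namespace PreAPFA

variable {V : Type u} {E : Type v} {Sym : Type w}

theorem isPathFrom_append {A : PreAPFA V E Sym} {u v w : V} {es fs : List E}
    (h1 : A.IsPathFrom u v es) (h2 : A.IsPathFrom v w fs) :
    A.IsPathFrom u w (es ++ fs) := by
  induction es generalizing u with
  | nil => cases h1; exact h2
  | cons e es ih => exact ⟨h1.1, ih h1.2⟩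

theorem isPathFrom_snoc {A : PreAPFA V E Sym} {u w : V} {es : List E} {e : E} :
    A.IsPathFrom u w (es ++ [e]) ↔ A.IsPathFrom u (A.src e) es ∧ A.tgt e = w := by
  induction es generalizing u with
  | nil =>
    constructor
    · rintro ⟨h1, h2⟩; exact ⟨h1.symm, h2⟩
    · rintro ⟨h1, h2⟩; exact ⟨h1.symm, h2⟩
  | cons f fs ih =>
    constructor
    · rintro ⟨h1, h2⟩
      obtain ⟨h3, h4⟩ := ih.1 h2
      exact ⟨⟨h1, h3⟩, h4⟩
    · rintro ⟨⟨h1, h2⟩, h3⟩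
      exact ⟨h1, ih.2 ⟨h2, h3⟩⟩

theorem isPathFrom_map {V' : Type u} {E' : Type v}
    {A : PreAPFA V E Sym} {A' : PreAPFA V' E' Sym} (φV : V → V') (φE : E → E')
    (hs : ∀ e, A'.src (φE e) = φV (A.src e)) (ht : ∀ e, A'.tgt (φE e) = φV (A.tgt e))
    {u w : V} {es : List E} (h : A.IsPathFrom u w es) :
    A'.IsPathFrom (φV u) (φV w) (es.map φE) := by
  induction es generalizing u with
  | nil => cases h; rfl
  | cons e es ih => exact ⟨by rw [hs, h.1], by rw [ht]; exact ih h.2⟩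

end PreAPFA

namespace APFAGraph

variable {V : Type u} {E : Type v} {Sym : Type w} [Fintype V] [Fintype E]
  (G : APFAGraph V E Sym)

theorem level_add {x : V} {j : ℕ} (h1 : G.toPreAPFA.HasLevel x j) {fs : List E}
    (h2 : G.toPreAPFA.IsPathFrom x G.sink fs) : j + fs.length = G.p := by
  obtain ⟨es, hes, hlen⟩ := h1
  have := G.const_len (es ++ fs) (PreAPFA.isPathFrom_append hes h2)
  simpa [hlen] using this

theorem level_unique {x : V} {i j : ℕ}
    (h1 : G.toPreAPFA.HasLevel x i) (h2 : G.toPreAPFA.HasLevel x j) : i = j := by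
  obtain ⟨es, fs, hes, hfs⟩ := G.connected x
  have e1 := G.level_add h1 hfs
  have e2 := G.level_add h2 hfs
  omega

theorem level_le {x : V} {j : ℕ} (h1 : G.toPreAPFA.HasLevel x j) : j ≤ G.p := by
  obtain ⟨es, fs, hes, hfs⟩ := G.connected x
  have := G.level_add h1 hfs
  omega

theorem sink_level : G.toPreAPFA.HasLevel G.sink G.p := by
  obtain ⟨es, fs, hes, hfs⟩ := G.connected G.sink
  exact ⟨es, hes, G.const_len es hes⟩

theorem level_lt_of_ne_sink {x : V} {j : ℕ} (hx : x ≠ G.sink)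
    (h1 : G.toPreAPFA.HasLevel x j) : j < G.p := by
  obtain ⟨es, fs, hes, hfs⟩ := G.connected x
  have := G.level_add h1 hfs
  rcases fs with _ | ⟨f, fs⟩
  · exact absurd hfs hx
  · simp only [List.length_cons] at this; omega

theorem eq_sink_of_level_p {x : V} (h1 : G.toPreAPFA.HasLevel x G.p) : x = G.sink := by
  by_contra hx
  exact absurd (G.level_lt_of_ne_sink hx h1) (lt_irrefl _)

theorem hasLevel_tgt {e : E} {j : ℕ} (h : G.toPreAPFA.HasLevel (G.src e) j) :
    G.toPreAPFA.HasLevel (G.tgt e) (j + 1) := by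
  obtain ⟨es, hes, hlen⟩ := h
  exact ⟨es ++ [e], PreAPFA.isPathFrom_snoc.2 ⟨hes, rfl⟩, by simp [hlen]⟩

theorem path_unique_of_sym {u w w' : V} {es fs : List E}
    (h : G.toPreAPFA.IsPathFrom u w es) (h' : G.toPreAPFA.IsPathFrom u w' fs)
    (hsym : es.map G.sym = fs.map G.sym) : es = fs ∧ w = w' := by
  induction es generalizing u fs with
  | nil =>
    cases h
    rcases fs with _ | ⟨f, fs⟩
    · cases h'; exact ⟨rfl, rfl⟩
    · simp at hsym
  | cons e es ih =>
    rcases fs with _ | ⟨f, fs⟩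
    · simp at hsym
    · simp only [List.map_cons, List.cons.injEq] at hsym
      have hef : e = f := G.sym_inj e f (h.1.trans h'.1.symm) hsym.1
      subst hef
      obtain ⟨h1, h2⟩ := ih h.2 h'.2 hsym.2
      exact ⟨by rw [h1], h2⟩

/-- Transfer: a path in `G` can be re-traced in a complete graph `H` whose symbol sets
contain those of `G`. -/
theorem exists_path_of_syms {V' : Type u} {E' : Type v} [Fintype V'] [Fintype E']
    {H : APFAGraph V' E' Sym} (hc : H.Complete)
    (hsub : ∀ k, G.symsAt k ⊆ H.symsAt k) :
    ∀ (es : List E) (v w : V) (u : V') (j : ℕ), G.toPreAPFA.IsPathFrom v w es →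
      G.toPreAPFA.HasLevel v j → H.toPreAPFA.HasLevel u j → j + es.length ≤ H.p →
      ∃ (fs : List E') (z : V'), H.toPreAPFA.IsPathFrom u z fs ∧
        fs.map H.sym = es.map G.sym := by
  intro es
  induction es with
  | nil => intro v w u j _ _ _ _; exact ⟨[], u, rfl, rfl⟩
  | cons e es ih =>
    intro v w u j hp hv hu hle
    have hsrc : G.src e = v := hp.1
    have hsym : G.sym e ∈ H.symsAt j := hsub j ⟨e, by rwa [hsrc], rfl⟩
    have hjp : j < H.p := by simp only [List.length_cons] at hle; omega
    obtain ⟨f, hf1, hf2⟩ := hc u j hu hjp _ hsym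
    have htv : G.toPreAPFA.HasLevel (G.tgt e) (j + 1) := by
      have := G.hasLevel_tgt (j := j) (e := e) (by rwa [hsrc])
      exact this
    have htu : H.toPreAPFA.HasLevel (H.tgt f) (j + 1) := by
      have := H.hasLevel_tgt (j := j) (e := f) (by rwa [hf1])
      exact this
    obtain ⟨fs, z, hfs, hfsym⟩ := ih (G.tgt e) w (H.tgt f) (j + 1) hp.2 htv htu
      (by simp only [List.length_cons] at hle; omega)
    exact ⟨f :: fs, z, ⟨hf1, hfs⟩, by simp [hfsym, hf2]⟩

end APFAGraph

theorem list_eq_nil_or_append {α : Type*} (l : List α) :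
    l = [] ∨ ∃ (L : List α) (b : α), l = L ++ [b] := by
  rcases List.eq_nil_or_concat l with h | ⟨L, b, h⟩
  · exact Or.inl h
  · exact Or.inr ⟨L, b, by rw [h, List.concat_eq_append]⟩

theorem sum_ite_of_unique {ι : Type*} [Fintype ι] {C : ι → Prop} {D : ∀ a, Decidable (C a)}
    (g : ι → ℝ) (hu : ∀ a b, C a → C b → a = b) (a₀ : ι) (h₀ : C a₀) :
    ∑ a, (@ite ℝ (C a) (D a) (g a) 0) = g a₀ := by
  rw [Finset.sum_eq_single a₀]
  · simp [h₀]
  · intro b _ hb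
    rw [if_neg fun hCb => hb (hu b a₀ hCb h₀)]
  · intro h; exact absurd (Finset.mem_univ a₀) h

theorem sum_ite_of_not_exists {ι : Type*} [Fintype ι] {C : ι → Prop} {D : ∀ a, Decidable (C a)}
    (g : ι → ℝ) (h : ¬ ∃ a, C a) : ∑ a, (@ite ℝ (C a) (D a) (g a) 0) = 0 :=
  Finset.sum_eq_zero fun a _ => if_neg fun hCa => h ⟨a, hCa⟩

/-- **Assertion I.** If the APFA `A₀` is obtained from an APFA `A` by
merging a set `s` of same-level states, then the corresponding completed models are
nested: every joint distribution realized by some assignment of edge probabilities to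
`(A₀)⁺` is also realized by some assignment of edge probabilities to `A⁺`. -/
theorem assertion_I_completed_models_nested
    {V : Type u} {E : Type v} {V₀ : Type u} {E₀ : Type v}
    {V₁ : Type u} {E₁ : Type v} {V₂ : Type u} {E₂ : Type v} {Sym : Type w}
    [Fintype V] [Fintype E] [Fintype V₀] [Fintype E₀]
    [Fintype V₁] [Fintype E₁] [Fintype V₂] [Fintype E₂]
    (A : APFA V E Sym) (s : Set V) (i : ℕ)
    (hs : ∀ v ∈ s, A.toPreAPFA.HasLevel v i)
    (A₀ : APFA V₀ E₀ Sym) (φV : V → V₀) (φE : E → E₀)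
    (hmerge : IsMergeOf A s A₀ φV φE)
    (B : APFA V₁ E₁ Sym) (ιV : V → V₁) (ιE : E → E₁)
    (hcompl : IsCompletionOf A B ιV ιE)
    (B₀ : APFA V₂ E₂ Sym) (κV : V₀ → V₂) (κE : E₀ → E₂)
    (hcompl₀ : IsCompletionOf A₀ B₀ κV κE) :
    B₀.Model ⊆ B.Model := by
  classical
  intro P hP
  obtain ⟨π₀, hπ₀0, hπ₀1, hπ₀P⟩ := hP
  -- the common path length
  have hp : B.p = B₀.p := by
    rw [hcompl.p_eq, hcompl₀.p_eq, hmerge.p_eq]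
  -- symbol sets agree between `A` and `A₀`
  have hsymsA : ∀ k, A.toAPFAGraph.symsAt k = A₀.toAPFAGraph.symsAt k := by
    intro k
    ext t
    constructor
    · rintro ⟨e, ⟨es, hes, hlen⟩, rfl⟩
      refine ⟨φE e, ⟨es.map φE, ?_, by simpa using hlen⟩, hmerge.sym_comm e⟩
      have := PreAPFA.isPathFrom_map φV φE hmerge.src_comm hmerge.tgt_comm hes
      rwa [hmerge.root_comm, ← hmerge.src_comm] at this
    · rintro ⟨e₀, hlev, rfl⟩
      obtain ⟨e, rfl⟩ := hmerge.surjE e₀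
      obtain ⟨es, fs, hes, _⟩ := A.toAPFAGraph.connected (A.src e)
      have h1 : A.toPreAPFA.HasLevel (A.src e) es.length := ⟨es, hes, rfl⟩
      have h2 : A₀.toPreAPFA.HasLevel (A₀.src (φE e)) es.length := by
        refine ⟨es.map φE, ?_, by simp⟩
        have := PreAPFA.isPathFrom_map φV φE hmerge.src_comm hmerge.tgt_comm hes
        rwa [hmerge.root_comm, ← hmerge.src_comm] at this
      have hk := A₀.toAPFAGraph.level_unique hlev h2
      exact ⟨e, hk ▸ h1, (hmerge.sym_comm e).symm⟩
  -- symbol sets agree between `B` and `B₀`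
  have hsyms : ∀ k, B.toAPFAGraph.symsAt k = B₀.toAPFAGraph.symsAt k := by
    intro k
    rw [hcompl.syms_eq, hsymsA, ← hcompl₀.syms_eq]
  -- a chosen root path to every node of `B`
  obtain ⟨g, hgp⟩ : ∃ g : V₁ → List E₁, ∀ y, B.toPreAPFA.IsPathFrom B.root y (g y) := by
    choose g g2 hgp hg2 using B.toAPFAGraph.connected
    exact ⟨g, hgp⟩
  have hlvl : ∀ y, B.toPreAPFA.HasLevel y (g y).length := fun y => ⟨g y, hgp y, rfl⟩
  have hroot₁ : B.toPreAPFA.HasLevel B.root 0 := ⟨[], rfl, rfl⟩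
  have hroot₂ : B₀.toPreAPFA.HasLevel B₀.root 0 := ⟨[], rfl, rfl⟩
  -- the trace lemma for old nodes
  have T : ∀ (n : ℕ) (es : List E₁) (a : V) (fs : List E₂) (z : V₂), es.length = n →
      B.toPreAPFA.IsPathFrom B.root (ιV a) es → B₀.toPreAPFA.IsPathFrom B₀.root z fs →
      fs.map B₀.sym = es.map B.sym → z = κV (φV a) := by
    intro n
    induction n using Nat.strong_induction_on with
    | _ n ih =>
      intro es a fs z hlen hes hfs hsym
      rcases list_eq_nil_or_append es with rfl | ⟨es₀, e, rfl⟩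
      · have hfs0 : fs = [] := by
          have := congrArg List.length hsym
          simpa using this
        subst hfs0
        have hz : B₀.root = z := hfs
        have ha : a = A.root := hcompl.injV (by rw [hcompl.root_comm]; exact hes.symm)
        rw [← hz, ha, hmerge.root_comm, hcompl₀.root_comm]
      · obtain ⟨h1, h2⟩ := PreAPFA.isPathFrom_snoc.1 hes
        rcases list_eq_nil_or_append fs with rfl | ⟨fs₀, f, rfl⟩
        · exfalso
          have := congrArg List.length hsym
          simp at this
        obtain ⟨h3, h4⟩ := PreAPFA.isPathFrom_snoc.1 hfs
        rw [List.map_append, List.map_append] at hsym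
        obtain ⟨hsym0, hsyme⟩ := List.append_inj' hsym (by simp)
        have hsyme : B₀.sym f = B.sym e := by simpa using hsyme
        by_cases he : e ∈ Set.range ιE
        · obtain ⟨eA, rfl⟩ := he
          have hlt : es₀.length < n := by simp at hlen; omega
          have h1' : B.toPreAPFA.IsPathFrom B.root (ιV (A.src eA)) es₀ := by
            rwa [hcompl.src_comm] at h1
          have hz0 : B₀.src f = κV (φV (A.src eA)) :=
            ih es₀.length hlt es₀ (A.src eA) fs₀ (B₀.src f) rfl h1' h3 hsym0
          have hf : f = κE (φE eA) := by
            refine B₀.sym_inj f (κE (φE eA)) ?_ ?_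
            · rw [hz0, hcompl₀.src_comm, hmerge.src_comm]
            · rw [hsyme, hcompl₀.sym_comm, hmerge.sym_comm, hcompl.sym_comm]
          have ha : A.tgt eA = a := hcompl.injV (by rw [← hcompl.tgt_comm]; exact h2)
          rw [← h4, hf, hcompl₀.tgt_comm, hmerge.tgt_comm, ha]
        · have hsink : B.tgt e = B.sink := hcompl.new_edge_tgt e he ⟨a, h2.symm⟩
          have ha : a = A.sink := hcompl.injV (by rw [hcompl.sink_comm, ← hsink, h2])
          have hrs : B.toPreAPFA.IsRootSink (es₀ ++ [e]) := by
            have : ιV a = B.sink := by rw [← h2, hsink]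
            rwa [PreAPFA.IsRootSink, ← this]
          have hlenp : (es₀ ++ [e]).length = B.p := B.const_len _ hrs
          have hzlev : B₀.toPreAPFA.HasLevel z (fs₀ ++ [f]).length := ⟨_, hfs, rfl⟩
          have hlenfs : (fs₀ ++ [f]).length = B₀.p := by
            have := congrArg List.length hsym
            simp only [List.length_map, List.length_append] at this
            simp only [List.length_append]
            rw [← hp, ← hlenp]
            simpa using this
          have hz : z = B₀.sink := B₀.toAPFAGraph.eq_sink_of_level_p (hlenfs ▸ hzlev)
          rw [hz, ha, hmerge.sink_comm, hcompl₀.sink_comm]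
  -- the coherence lemma: matching retraces of paths to the same node end at the same node
  have CL : ∀ (n : ℕ) (es es' : List E₁) (y : V₁) (fs fs' : List E₂) (z z' : V₂),
      es.length = n →
      B.toPreAPFA.IsPathFrom B.root y es → B.toPreAPFA.IsPathFrom B.root y es' →
      B₀.toPreAPFA.IsPathFrom B₀.root z fs → B₀.toPreAPFA.IsPathFrom B₀.root z' fs' →
      fs.map B₀.sym = es.map B.sym → fs'.map B₀.sym = es'.map B.sym → z = z' := by
    intro n
    induction n using Nat.strong_induction_on with
    | _ n ih =>
      intro es es' y fs fs' z z' hlen hes hes' hfs hfs' hsym hsym'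
      by_cases hy : y ∈ Set.range ιV
      · obtain ⟨a, rfl⟩ := hy
        rw [T es.length es a fs z rfl hes hfs hsym,
          T es'.length es' a fs' z' rfl hes' hfs' hsym']
      · have hyr : y ≠ B.root := by
          intro h
          exact hy ⟨A.root, by rw [hcompl.root_comm, h]⟩
        obtain ⟨e!, he!, huniq⟩ := hcompl.new_node_unique_in y hy
        rcases list_eq_nil_or_append es with rfl | ⟨es₀, e, rfl⟩
        · exact absurd hes.symm hyr
        rcases list_eq_nil_or_append es' with rfl | ⟨es₀', e', rfl⟩
        · exact absurd hes'.symm hyr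
        obtain ⟨h1, h2⟩ := PreAPFA.isPathFrom_snoc.1 hes
        obtain ⟨h1', h2'⟩ := PreAPFA.isPathFrom_snoc.1 hes'
        have hee : e' = e := by rw [huniq e h2, huniq e' h2']
        rw [hee] at h1' hsym'
        rcases list_eq_nil_or_append fs with rfl | ⟨fs₀, f, rfl⟩
        · exfalso; have := congrArg List.length hsym; simp at this
        rcases list_eq_nil_or_append fs' with rfl | ⟨fs₀', f', rfl⟩
        · exfalso; have := congrArg List.length hsym'; simp at this
        obtain ⟨h3, h4⟩ := PreAPFA.isPathFrom_snoc.1 hfs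
        obtain ⟨h3', h4'⟩ := PreAPFA.isPathFrom_snoc.1 hfs'
        rw [List.map_append, List.map_append] at hsym hsym'
        obtain ⟨hsym0, hsyme⟩ := List.append_inj' hsym (by simp)
        obtain ⟨hsym0', hsyme'⟩ := List.append_inj' hsym' (by simp)
        have hlt : es₀.length < n := by simp at hlen; omega
        have hsrc : B₀.src f = B₀.src f' :=
          ih es₀.length hlt es₀ es₀' (B.src e) fs₀ fs₀' (B₀.src f) (B₀.src f') rfl
            h1 h1' h3 h3' hsym0 hsym0'
        have hff : f = f' := by
          refine B₀.sym_inj f f' hsrc ?_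
          have e1 : B₀.sym f = B.sym e := by simpa using hsyme
          have e2 : B₀.sym f' = B.sym e := by simpa using hsyme'
          rw [e1, e2]
        rw [← h4, ← h4', hff]
  -- the corresponding edge in `B₀` of an edge of `B`
  have hcorr : ∀ e : E₁, ∃ (f : E₂) (fs₁ : List E₂),
      B₀.toPreAPFA.IsPathFrom B₀.root (B₀.tgt f) (fs₁ ++ [f]) ∧
      fs₁.map B₀.sym = (g (B.src e)).map B.sym ∧ B₀.sym f = B.sym e := by
    intro e
    have hpath : B.toPreAPFA.IsPathFrom B.root (B.tgt e) (g (B.src e) ++ [e]) :=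
      PreAPFA.isPathFrom_snoc.2 ⟨hgp _, rfl⟩
    have hle : 0 + (g (B.src e) ++ [e]).length ≤ B₀.p := by
      have hlev : B.toPreAPFA.HasLevel (B.tgt e) (g (B.src e) ++ [e]).length :=
        ⟨_, hpath, rfl⟩
      have := B.toAPFAGraph.level_le hlev
      omega
    obtain ⟨fs, z, hfs, hfsym⟩ := B.toAPFAGraph.exists_path_of_syms hcompl₀.complete
      (fun k => (hsyms k).le) (g (B.src e) ++ [e]) B.root (B.tgt e) B₀.root 0
      hpath hroot₁ hroot₂ hle
    rcases list_eq_nil_or_append fs with rfl | ⟨fs₁, f, rfl⟩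
    · exfalso; have := congrArg List.length hfsym; simp at this
    obtain ⟨hf3, hf4⟩ := PreAPFA.isPathFrom_snoc.1 hfs
    rw [List.map_append, List.map_append] at hfsym
    obtain ⟨hs0, hs1⟩ := List.append_inj' hfsym (by simp)
    exact ⟨f, fs₁, hf4 ▸ hfs, hs0, by simpa using hs1⟩
  choose corr corrPre hcorrPath hcorrStr hcorrSym using hcorr
  -- the source of the corresponding edge is determined
  have hcorrSrc : ∀ (e : E₁) (es : List E₁) (fs : List E₂) (z : V₂),
      B.toPreAPFA.IsPathFrom B.root (B.src e) es →
      B₀.toPreAPFA.IsPathFrom B₀.root z fs →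
      fs.map B₀.sym = es.map B.sym → B₀.src (corr e) = z := by
    intro e es fs z hes hfs hstr
    obtain ⟨hpre, _⟩ := PreAPFA.isPathFrom_snoc.1 (hcorrPath e)
    exact CL (g (B.src e)).length (g (B.src e)) es (B.src e) (corrPre e) fs
      (B₀.src (corr e)) z rfl (hgp _) hes hpre hfs (hcorrStr e) hstr
  -- a canonical `B₀` node for every `B` node
  have hψ : ∀ x : V₁, ∃ (z : V₂) (fs : List E₂),
      B₀.toPreAPFA.IsPathFrom B₀.root z fs ∧ fs.map B₀.sym = (g x).map B.sym := by
    intro x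
    have hle : 0 + (g x).length ≤ B₀.p := by
      have := B.toAPFAGraph.level_le (hlvl x)
      omega
    obtain ⟨fs, z, hfs, hfsym⟩ := B.toAPFAGraph.exists_path_of_syms hcompl₀.complete
      (fun k => (hsyms k).le) (g x) B.root x B₀.root 0 (hgp x) hroot₁ hroot₂ hle
    exact ⟨z, fs, hfs, hfsym⟩
  choose ψ ψpath hψ1 hψ2 using hψ
  have hψlev : ∀ x, B₀.toPreAPFA.HasLevel (ψ x) (g x).length := by
    intro x
    refine ⟨ψpath x, hψ1 x, ?_⟩
    have := congrArg List.length (hψ2 x)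
    simpa using this
  have hcorrψ : ∀ e : E₁, B₀.src (corr e) = ψ (B.src e) := fun e =>
    hcorrSrc e (g (B.src e)) (ψpath (B.src e)) (ψ (B.src e)) (hgp _) (hψ1 _) (hψ2 _)
  -- the new edge probabilities sum to one
  have hsum : ∀ x : V₁, x ≠ B.sink →
      ∑ e : E₁, (if B.src e = x then π₀ (corr e) else 0) = 1 := by
    intro x hx
    have hjlt : (g x).length < B.p := B.toAPFAGraph.level_lt_of_ne_sink hx (hlvl x)
    have hψns : ψ x ≠ B₀.sink := by
      intro h
      have := B₀.toAPFAGraph.level_unique (h ▸ hψlev x) B₀.toAPFAGraph.sink_level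
      omega
    rw [← hπ₀1 (ψ x) hψns]
    rw [← Finset.sum_filter, ← Finset.sum_filter]
    refine Finset.sum_bij (fun e _ => corr e) ?_ ?_ ?_ ?_
    · intro e he
      simp only [Finset.mem_filter, Finset.mem_univ, true_and] at he ⊢
      rw [hcorrψ e, he]
    · intro e₁ h₁ e₂ h₂ hc
      simp only [Finset.mem_filter, Finset.mem_univ, true_and] at h₁ h₂
      refine B.sym_inj e₁ e₂ (h₁.trans h₂.symm) ?_
      rw [← hcorrSym e₁, ← hcorrSym e₂]
      exact congrArg B₀.sym hc
    · intro f hf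
      simp only [Finset.mem_filter, Finset.mem_univ, true_and] at hf
      have hfsym : B₀.sym f ∈ B₀.toAPFAGraph.symsAt (g x).length :=
        ⟨f, hf ▸ hψlev x, rfl⟩
      rw [← hsyms] at hfsym
      obtain ⟨e, hesrc, hesym⟩ := hcompl.complete x (g x).length (hlvl x) hjlt _ hfsym
      refine ⟨e, by simp [hesrc], ?_⟩
      refine (B₀.sym_inj (corr e) f ?_ ?_).symm.symm
      · rw [hcorrψ e, hesrc, hf]
      · rw [hcorrSym e, hesym]
    · intro e _; rfl
  -- conclude: exhibit the probability assignment for `B`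
  refine ⟨fun e => π₀ (corr e), fun e => hπ₀0 _, hsum, ?_⟩
  -- the product of probabilities along matching paths agree
  have PL : ∀ (n : ℕ) (es : List E₁) (fs : List E₂) (y : V₁) (z : V₂), es.length = n →
      B.toPreAPFA.IsPathFrom B.root y es → B₀.toPreAPFA.IsPathFrom B₀.root z fs →
      fs.map B₀.sym = es.map B.sym →
      (fs.map π₀).prod = (es.map (fun e => π₀ (corr e))).prod := by
    intro n
    induction n using Nat.strong_induction_on with
    | _ n ih =>
      intro es fs y z hlen hes hfs hsym
      rcases list_eq_nil_or_append es with rfl | ⟨es₀, e, rfl⟩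
      · have hfs0 : fs = [] := by
          have := congrArg List.length hsym; simpa using this
        subst hfs0; rfl
      rcases list_eq_nil_or_append fs with rfl | ⟨fs₀, f, rfl⟩
      · exfalso; have := congrArg List.length hsym; simp at this
      obtain ⟨h1, h2⟩ := PreAPFA.isPathFrom_snoc.1 hes
      obtain ⟨h3, h4⟩ := PreAPFA.isPathFrom_snoc.1 hfs
      rw [List.map_append, List.map_append] at hsym
      obtain ⟨hsym0, hsyme⟩ := List.append_inj' hsym (by simp)
      have hsyme : B₀.sym f = B.sym e := by simpa using hsyme
      have hlt : es₀.length < n := by simp at hlen; omega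
      have hpref := ih es₀.length hlt es₀ fs₀ (B.src e) (B₀.src f) rfl h1 h3 hsym0
      have hf : f = corr e := by
        refine B₀.sym_inj f (corr e) ?_ ?_
        · rw [hcorrSrc e es₀ fs₀ (B₀.src f) h1 h3 hsym0]
        · rw [hsyme, hcorrSym e]
      simp only [List.map_append, List.prod_append, List.map_cons, List.map_nil,
        List.prod_cons, List.prod_nil]
      rw [hpref, hf]
  intro xs
  rw [hπ₀P xs]
  have hu₁ : ∀ a b : Fin B.p → E₁,
      (B.IsRootSink (List.ofFn a) ∧ (List.ofFn a).map B.sym = xs) →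
      (B.IsRootSink (List.ofFn b) ∧ (List.ofFn b).map B.sym = xs) → a = b := by
    rintro a b ⟨ha, has⟩ ⟨hb, hbs⟩
    have := B.toAPFAGraph.path_unique_of_sym ha hb (has.trans hbs.symm)
    exact List.ofFn_inj.1 this.1
  have hu₂ : ∀ a b : Fin B₀.p → E₂,
      (B₀.IsRootSink (List.ofFn a) ∧ (List.ofFn a).map B₀.sym = xs) →
      (B₀.IsRootSink (List.ofFn b) ∧ (List.ofFn b).map B₀.sym = xs) → a = b := by
    rintro a b ⟨ha, has⟩ ⟨hb, hbs⟩
    have := B₀.toAPFAGraph.path_unique_of_sym ha hb (has.trans hbs.symm)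
    exact List.ofFn_inj.1 this.1
  by_cases hex : ∃ f₂ : Fin B₀.p → E₂,
      B₀.IsRootSink (List.ofFn f₂) ∧ (List.ofFn f₂).map B₀.sym = xs
  · obtain ⟨f₂, hf₂⟩ := hex
    -- build the matching path in `B`
    have hlen₂ : (List.ofFn f₂).length = B₀.p := by simp
    have hle : 0 + (List.ofFn f₂).length ≤ B.p := by rw [hlen₂, hp]; omega
    obtain ⟨es₁, z, hes₁, hfsym⟩ := B₀.toAPFAGraph.exists_path_of_syms hcompl.complete
      (fun k => (hsyms k).ge) (List.ofFn f₂) B₀.root B₀.sink B.root 0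
      hf₂.1 hroot₂ hroot₁ hle
    have hlen₁ : es₁.length = B.p := by
      have := congrArg List.length hfsym
      simp only [List.length_map] at this
      rw [this, hlen₂, hp]
    have hzsink : z = B.sink := by
      refine B.toAPFAGraph.eq_sink_of_level_p ?_
      exact hlen₁ ▸ ⟨es₁, hes₁, rfl⟩
    set f₁ : Fin B.p → E₁ := fun i => es₁.get (Fin.cast hlen₁.symm i) with hf₁def
    have hofn : List.ofFn f₁ = es₁ := by
      refine List.ext_get (by simp [hlen₁]) ?_
      intro n h1 h2
      simp [hf₁def]
    have hf₁ : B.IsRootSink (List.ofFn f₁) ∧ (List.ofFn f₁).map B.sym = xs := by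
      constructor
      · rw [hofn]; rw [PreAPFA.IsRootSink, ← hzsink]; exact hes₁
      · rw [hofn, hfsym, hf₂.2]
    refine Eq.trans (sum_ite_of_unique _ hu₂ f₂ hf₂) ?_
    refine Eq.trans ?_ (sum_ite_of_unique _ hu₁ f₁ hf₁).symm
    rw [hofn]
    exact PL es₁.length es₁ (List.ofFn f₂) z B₀.sink rfl hes₁ hf₂.1 hfsym.symm
  · have hex₁ : ¬ ∃ f₁ : Fin B.p → E₁,
        B.IsRootSink (List.ofFn f₁) ∧ (List.ofFn f₁).map B.sym = xs := by
      rintro ⟨f₁, hf₁⟩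
      refine hex ?_
      have hlen₁ : (List.ofFn f₁).length = B.p := by simp
      have hle : 0 + (List.ofFn f₁).length ≤ B₀.p := by rw [hlen₁, ← hp]; omega
      obtain ⟨fs₂, z, hfs₂, hfsym⟩ := B.toAPFAGraph.exists_path_of_syms hcompl₀.complete
        (fun k => (hsyms k).le) (List.ofFn f₁) B.root B.sink B₀.root 0
        hf₁.1 hroot₁ hroot₂ hle
      have hlen₂ : fs₂.length = B₀.p := by
        have := congrArg List.length hfsym
        simp only [List.length_map] at this
        rw [this, hlen₁, hp]
      have hzsink : z = B₀.sink := by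
        refine B₀.toAPFAGraph.eq_sink_of_level_p ?_
        exact hlen₂ ▸ ⟨fs₂, hfs₂, rfl⟩
      set f₂ : Fin B₀.p → E₂ := fun i => fs₂.get (Fin.cast hlen₂.symm i) with hf₂def
      have hofn : List.ofFn f₂ = fs₂ := by
        refine List.ext_get (by simp [hlen₂]) ?_
        intro n h1 h2
        simp [hf₂def]
      refine ⟨f₂, ?_, ?_⟩
      · rw [hofn]; rw [PreAPFA.IsRootSink, ← hzsink]; exact hfs₂
      · rw [hofn, hfsym, hf₁.2]
    exact Eq.trans (sum_ite_of_not_exists _ hex) (sum_ite_of_not_exists _ hex₁).symm
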